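/- arXiv:1608.04818 — 4 statements merged into one kernel-verified Lean document; each statement's English description precedes it below -/
import Mathlib

section
/- For p, q ∈ δ_N, the vector s^inf defined recursively by s^inf_i = min{Σ_{l≤i} p_l, Σ_{l≤i} q_l} − Σ_{l<i} s^inf_l (with s^inf_0 = 0) belongs to δ_N and is the infimum of p and q under majorization: s^inf ≺ p, s^inf ≺ q, and every s ∈ δ_N with s ≺ p and s ≺ q satisfies s ≺ s^inf. -/
open Finset

/-- Partial sum of the first `l` components of `p`. -/
def PartSum {N : ℕ} (p : Fin N → ℝ) (l : ℕ) : ℝ := ∑ i : Fin N, if (i : ℕ) < l then p i else 0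

/-- `p` is a probability vector sorted in decreasing order (an element of δ_N). -/
def IsDecProb {N : ℕ} (p : Fin N → ℝ) : Prop :=
  (∀ i, 0 ≤ p i) ∧ (∀ i j : Fin N, i ≤ j → p j ≤ p i) ∧ ∑ i, p i = 1

/-- `p ≺ q` : every partial sum of `p` is at most the corresponding partial sum of `q`. -/
def Maj {N : ℕ} (p q : Fin N → ℝ) : Prop := ∀ l : ℕ, PartSum p l ≤ PartSum q l

/-- `s` is the supremum of `p` and `q` in the majorization lattice. -/
def IsSup {N : ℕ} (s p q : Fin N → ℝ) : Prop :=
  IsDecProb s ∧ Maj p s ∧ Maj q s ∧ ∀ t, IsDecProb t → Maj p t → Maj q t → Maj s t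

/-- `s` is the infimum of `p` and `q` in the majorization lattice. -/
def IsInf {N : ℕ} (s p q : Fin N → ℝ) : Prop :=
  IsDecProb s ∧ Maj s p ∧ Maj s q ∧ ∀ t, IsDecProb t → Maj t p → Maj t q → Maj t s

/-- Shannon entropy. -/
noncomputable def H {N : ℕ} (p : Fin N → ℝ) : ℝ := -∑ i, p i * Real.log (p i)

/-- The candidate infimum: its partial sums are the minima of the partial sums of p and q. -/
noncomputable def sInfVec {N : ℕ} (p q : Fin N → ℝ) (i : Fin N) : ℝ :=
  min (PartSum p ((i : ℕ) + 1)) (PartSum q ((i : ℕ) + 1)) - min (PartSum p (i : ℕ)) (PartSum q (i : ℕ))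

/-!
Majorization compares vectors of `δ_N` through their partial sums, which form nondecreasing
concave sequences running from `0` to `1` (concavity is the decreasing order).
The pointwise minimum of two such sequences is again one of them, and `sInfVec p q` is the
vector whose partial sums are this minimum; being below it is the same as being below both.
-/

section PartialSums
variable {N : ℕ}

def padZero (p : Fin N → ℝ) (k : ℕ) : ℝ := if h : k < N then p ⟨k, h⟩ else 0

lemma padZero_of_le (p : Fin N → ℝ) {k : ℕ} (h : N ≤ k) : padZero p k = 0 :=
  dif_neg h.not_gt

lemma partSum_eq_sum_range (p : Fin N → ℝ) (l : ℕ) :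
    PartSum p l = ∑ k ∈ range l, padZero p k := by
  calc PartSum p l = ∑ k ∈ range N, if k ∈ range l then padZero p k else 0 := by
        simp only [PartSum, mem_range]
        rw [← Fin.sum_univ_eq_sum_range]
        simp [padZero]
    _ = ∑ k ∈ range l, padZero p k := by
        rw [sum_ite_mem, inter_comm]
        exact sum_subset inter_subset_left fun k hkl hk =>
          padZero_of_le p (by simpa [mem_range, mem_range.1 hkl] using hk)

lemma partSum_succ (p : Fin N → ℝ) (l : ℕ) :
    PartSum p (l + 1) = PartSum p l + padZero p l := by
  simp only [partSum_eq_sum_range, sum_range_succ]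

lemma partSum_of_le (p : Fin N → ℝ) {l : ℕ} (h : N ≤ l) : PartSum p l = ∑ i, p i :=
  sum_congr rfl fun i _ => if_pos (i.isLt.trans_le h)

lemma monotone_partSum {p : Fin N → ℝ} (hp : ∀ i, 0 ≤ p i) : Monotone (PartSum p) := by
  refine monotone_nat_of_le_succ fun l => ?_
  rw [partSum_succ, le_add_iff_nonneg_right, padZero]
  split_ifs
  exacts [hp _, le_rfl]

lemma antitone_padZero {p : Fin N → ℝ} (hp : IsDecProb p) : Antitone (padZero p) := by
  refine antitone_nat_of_succ_le fun l => ?_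
  unfold padZero
  split_ifs with h₁ h₂ h₂
  · exact hp.2.1 _ _ (Fin.le_def.2 l.le_succ)
  · exact absurd (l.lt_succ_self.trans h₁) h₂
  · exact hp.1 _
  · exact le_rfl

lemma antitone_partSum_sub {p : Fin N → ℝ} (hp : IsDecProb p) :
    Antitone fun l => PartSum p (l + 1) - PartSum p l := by
  simpa only [partSum_succ, add_sub_cancel_left] using antitone_padZero hp

end PartialSums

lemma antitone_min_sub_min {f g : ℕ → ℝ} (hf : Antitone fun l => f (l + 1) - f l)
    (hg : Antitone fun l => g (l + 1) - g l) :
    Antitone fun l => min (f (l + 1)) (g (l + 1)) - min (f l) (g l) := by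
  refine antitone_nat_of_succ_le fun l => ?_
  have hf' := hf l.le_succ
  have hg' := hg l.le_succ
  rcases le_total (f (l + 1)) (g (l + 1)) with h | h
  · rw [min_eq_left h]
    linarith [min_le_left (f (l + 2)) (g (l + 2)), min_le_left (f l) (g l)]
  · rw [min_eq_right h]
    linarith [min_le_right (f (l + 2)) (g (l + 2)), min_le_right (f l) (g l)]

section sInfVec
variable {N : ℕ}

lemma partSum_sInfVec (p q : Fin N → ℝ) (l : ℕ) :
    PartSum (sInfVec p q) l = min (PartSum p l) (PartSum q l) := by
  induction l with
  | zero => simp [PartSum]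
  | succ l ih =>
    rw [partSum_succ, ih]
    by_cases h : l < N
    · simp [padZero, h, sInfVec]
    · have hN : N ≤ l := not_lt.1 h
      simp [partSum_succ p, partSum_succ q, padZero_of_le _ hN]

lemma maj_sInfVec_iff (t p q : Fin N → ℝ) :
    Maj t (sInfVec p q) ↔ Maj t p ∧ Maj t q := by
  simp only [Maj, partSum_sInfVec, le_min_iff, forall_and]

lemma isDecProb_sInfVec {p q : Fin N → ℝ} (hp : IsDecProb p) (hq : IsDecProb q) :
    IsDecProb (sInfVec p q) := by
  have hmono : Monotone fun l => min (PartSum p l) (PartSum q l) :=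
    (monotone_partSum hp.1).min (monotone_partSum hq.1)
  have hconc := antitone_min_sub_min (antitone_partSum_sub hp) (antitone_partSum_sub hq)
  refine ⟨fun i => sub_nonneg.2 (hmono (Nat.le_succ i)), fun i j hij => hconc hij, ?_⟩
  rw [← partSum_of_le _ le_rfl, partSum_sInfVec, partSum_of_le p le_rfl, partSum_of_le q le_rfl,
    hp.2.2, hq.2.2, min_self]

end sInfVec

/-- The recursively defined vector s^inf belongs to δ_N and is the infimum of p and q
under majorization. -/
theorem sInfVec_isInf {N : ℕ} (p q : Fin N → ℝ) (hp : IsDecProb p) (hq : IsDecProb q) :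
    IsDecProb (sInfVec p q) ∧ IsInf (sInfVec p q) p q := by
  have hs := isDecProb_sInfVec hp hq
  obtain ⟨hsp, hsq⟩ := (maj_sInfVec_iff (sInfVec p q) p q).1 fun _ => le_rfl
  exact ⟨hs, hs, hsp, hsq, fun t _ htp htq => (maj_sInfVec_iff t p q).2 ⟨htp, htq⟩⟩
end

section
/- The vector s defined by s_1 = max{p_1, q_1} and s_i = max{Σ_{l≤i} p_l, Σ_{l≤i} q_l} − Σ_{l<i} s_l need not be sorted in decreasing order; i.e., there exist p, q ∈ δ_N for which s ∉ δ_N. -/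
open Finset

/-- The upper-envelope vector: its partial sums are the maxima of the partial sums of p and q. -/
noncomputable def sMaxVec {N : ℕ} (p q : Fin N → ℝ) (i : Fin N) : ℝ :=
  max (PartSum p ((i : ℕ) + 1)) (PartSum q ((i : ℕ) + 1)) - max (PartSum p (i : ℕ)) (PartSum q (i : ℕ))

/- With p = (2/5, 1/5, 1/5, 1/5) and q = (3/10, 3/10, 3/10, 1/10) the partial sums are
(2/5, 3/5, 4/5, 1) and (3/10, 3/5, 9/10, 1), so their envelope (2/5, 3/5, 9/10, 1) yields
s = (2/5, 1/5, 3/10, 1/10): when the dominating vector switches from p to q, s increases. -/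

theorem IsDecProb.antitone {N : ℕ} {s : Fin N → ℝ} (hs : IsDecProb s) : Antitone s :=
  fun _ _ hij => hs.2.1 _ _ hij

theorem isDecProb_vecFour {a b c d : ℝ} (hd : 0 ≤ d) (hdc : d ≤ c) (hcb : c ≤ b) (hba : b ≤ a)
    (hsum : a + b + c + d = 1) : IsDecProb ![a, b, c, d] := by
  refine ⟨?_, ?_, by simpa [Fin.sum_univ_four] using hsum⟩
  · intro i
    fin_cases i <;> simp <;> linarith
  · intro i j hij
    fin_cases i <;> fin_cases j <;> simp at hij ⊢ <;> linarith

theorem partSum_vecFour (a b c d : ℝ) :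
    PartSum ![a, b, c, d] 1 = a ∧ PartSum ![a, b, c, d] 2 = a + b ∧
      PartSum ![a, b, c, d] 3 = a + b + c := by
  simp [PartSum, Fin.sum_univ_four]

theorem sMaxVec_vecFour (a b c d a' b' c' d' : ℝ) :
    sMaxVec ![a, b, c, d] ![a', b', c', d'] 1 = max (a + b) (a' + b') - max a a' ∧
      sMaxVec ![a, b, c, d] ![a', b', c', d'] 2 =
        max (a + b + c) (a' + b' + c') - max (a + b) (a' + b') := by
  simp [sMaxVec, partSum_vecFour]

/-- The upper-envelope construction need not give a decreasingly sorted probability vector: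
there exist p, q ∈ δ_N with s ∉ δ_N. -/
theorem sMaxVec_not_always_in_delta :
    ∃ (N : ℕ) (p q : Fin N → ℝ), IsDecProb p ∧ IsDecProb q ∧ ¬ IsDecProb (sMaxVec p q) := by
  refine ⟨4, ![2/5, 1/5, 1/5, 1/5], ![3/10, 3/10, 3/10, 1/10],
    isDecProb_vecFour (by norm_num) le_rfl le_rfl (by norm_num) (by norm_num),
    isDecProb_vecFour (by norm_num) (by norm_num) le_rfl le_rfl (by norm_num), fun hs => ?_⟩
  have hmono := hs.antitone (show (1 : Fin 4) ≤ 2 by decide)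
  obtain ⟨hs₁, hs₂⟩ := sMaxVec_vecFour (2/5 : ℝ) (1/5) (1/5) (1/5) (3/10) (3/10) (3/10) (1/10)
  rw [hs₁, hs₂] at hmono
  norm_num at hmono
end

section
/- If s is a vector whose partial sums are S_i(s) = max{S_i(p), S_i(q)} for p, q ∈ δ_N, and j is the smallest index with s_j > s_{j−1}, and k ≤ j−1 is the greatest index with s_{k−1} ≥ a where a = (Σ_{l=k}^{j} s_l)/(j−k+1), then the 'flattening' transformation that replaces s_k,...,s_j each by a and leaves other components unchanged preserves the property of majorizing both p and q. -/
/-!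
Since s_{j-1} < s_j and k is maximal, every s_m with k ≤ m < j lies below the mean of
s_{m+1}, …, s_j. Hence the means of the suffixes s_m, …, s_j of the block increase with m, so
each dominates the mean a of the whole block; equivalently every prefix s_k, …, s_l of the block
sums to at most (l - k + 1) a. Replacing the block by its mean therefore does not decrease any
partial sum of s, and S_l(s) = max (S_l(p), S_l(q)).
-/

open Finset

/-- Partial sum S_l(p) = Σ_{i=1}^l p_i (1-based indexing). -/
def PS (p : ℕ → ℝ) (l : ℕ) : ℝ := ∑ i ∈ Finset.Icc 1 l, p i

section BlockMean

variable {s : ℕ → ℝ} {k j : ℕ} {a : ℝ}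

lemma mul_le_sum_Icc_of_le_tail_mean (hmean : ((j - k + 1 : ℕ) : ℝ) * a ≤ ∑ i ∈ Icc k j, s i)
    (htail : ∀ m, k ≤ m → m < j → ((j - m : ℕ) : ℝ) * s m ≤ ∑ i ∈ Ioc m j, s i)
    {m : ℕ} (hkm : k ≤ m) (hmj : m ≤ j) :
    ((j - m + 1 : ℕ) : ℝ) * a ≤ ∑ i ∈ Icc m j, s i := by
  induction m, hkm using Nat.le_induction with
  | base => exact hmean
  | succ m hkm ih =>
    have hm := ih (by omega)
    rw [← add_sum_Ioc_eq_sum_Icc (by omega : m ≤ j), show j - m + 1 = (j - m) + 1 by omega,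
      Nat.cast_add, Nat.cast_one] at hm
    rw [Icc_add_one_left_eq_Ioc, show j - (m + 1) + 1 = j - m by omega]
    have hsm := htail m hkm (by omega)
    have hpos : (0 : ℝ) < (j - m : ℕ) := by exact_mod_cast (by omega : 0 < j - m)
    -- the mean of s_m, …, s_j lies between s_m and the mean of the tail s_{m+1}, …, s_j
    nlinarith [mul_le_mul_of_nonneg_left hm hpos.le]

lemma sum_Icc_sub_nonneg_of_le_tail_mean (hmean : ((j - k + 1 : ℕ) : ℝ) * a = ∑ i ∈ Icc k j, s i)
    (htail : ∀ m, k ≤ m → m < j → ((j - m : ℕ) : ℝ) * s m ≤ ∑ i ∈ Ioc m j, s i)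
    {l : ℕ} (hlj : l ≤ j) :
    0 ≤ ∑ i ∈ Icc k l, (a - s i) := by
  rcases lt_or_ge l k with hlk | hkl
  · simp [Icc_eq_empty_of_lt hlk]
  have hsplit : ∑ i ∈ Icc k l, s i + ∑ i ∈ Ioc l j, s i = ∑ i ∈ Icc k j, s i := by
    rw [← Ico_add_one_right_eq_Icc, ← Ico_add_one_add_one_eq_Ioc, ← Ico_add_one_right_eq_Icc,
      sum_Ico_consecutive _ (by omega) (by omega)]
  have hsuffix : ((j - l : ℕ) : ℝ) * a ≤ ∑ i ∈ Ioc l j, s i := by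
    rcases hlj.eq_or_lt with rfl | hlj
    · simp
    simpa [Icc_add_one_left_eq_Ioc, show j - (l + 1) + 1 = j - l by omega] using
      mul_le_sum_Icc_of_le_tail_mean hmean.le htail (m := l + 1) (by omega) hlj
  have hcard : ((j - k + 1 : ℕ) : ℝ) = ((l + 1 - k : ℕ) : ℝ) + ((j - l : ℕ) : ℝ) := by
    rw [← Nat.cast_add]; congr 1; omega
  rw [hcard, add_mul] at hmean
  rw [sum_sub_distrib, sum_const, Nat.card_Icc, nsmul_eq_mul]
  linarith

lemma le_tail_mean_of_maximal (hjs : s (j - 1) < s j)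
    (hkmax : ∀ k', 1 ≤ k' → k' ≤ j - 1 →
      (k' = 1 ∨ (∑ i ∈ Icc k' j, s i) / ((j - k' + 1 : ℕ) : ℝ) ≤ s (k' - 1)) → k' ≤ k)
    {m : ℕ} (hkm : k ≤ m) (hmj : m < j) :
    ((j - m : ℕ) : ℝ) * s m ≤ ∑ i ∈ Ioc m j, s i := by
  rcases Nat.lt_or_ge (m + 1) j with hm | hm
  · -- k' = m + 1 > k must violate the condition defining k
    have hlt : s m < (∑ i ∈ Icc (m + 1) j, s i) / ((j - (m + 1) + 1 : ℕ) : ℝ) := by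
      by_contra! hge
      have := hkmax (m + 1) (by omega) (by omega) (Or.inr (by simpa using hge))
      omega
    rw [show j - (m + 1) + 1 = j - m by omega,
      lt_div_iff₀ (by exact_mod_cast (by omega : 0 < j - m)), Icc_add_one_left_eq_Ioc] at hlt
    linarith
  · obtain rfl : j = m + 1 := by omega
    simpa [Nat.Ioc_succ_singleton] using hjs.le

end BlockMean

def flatten (s : ℕ → ℝ) (k j : ℕ) (a : ℝ) (i : ℕ) : ℝ := if k ≤ i ∧ i ≤ j then a else s i

lemma PS_flatten_sub_PS (s : ℕ → ℝ) {k : ℕ} (hk : 1 ≤ k) (j : ℕ) (a : ℝ) (l : ℕ) :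
    PS (flatten s k j a) l - PS s l = ∑ i ∈ Icc k (min l j), (a - s i) := by
  have hblock : (Icc 1 l).filter (fun i => k ≤ i ∧ i ≤ j) = Icc k (min l j) := by
    ext i; simp only [mem_filter, mem_Icc, le_min_iff]; omega
  rw [PS, PS, ← sum_sub_distrib, ← hblock, sum_filter]
  refine sum_congr rfl fun i _ => ?_
  unfold flatten
  split_ifs <;> ring

lemma PS_le_PS_flatten {s : ℕ → ℝ} {k j : ℕ} {a : ℝ} (hk : 1 ≤ k)
    (hprefix : ∀ l ≤ j, 0 ≤ ∑ i ∈ Icc k l, (a - s i)) (l : ℕ) :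
    PS s l ≤ PS (flatten s k j a) l := by
  linarith [PS_flatten_sub_PS s hk j a l, hprefix (min l j) (min_le_right _ _)]

theorem flattening_preserves_majorizing_general (N : ℕ) (p q s : ℕ → ℝ)
    (hs : ∀ l, l ≤ N → PS s l = max (PS p l) (PS q l))
    (j k : ℕ) (a : ℝ) (t : ℕ → ℝ)
    -- j is the smallest index in [2,N] with s_j > s_{j-1}
    (hj : 2 ≤ j ∧ j ≤ N ∧ s (j - 1) < s j)
    -- a is the average of s_k, ..., s_j
    (ha : a = (∑ i ∈ Finset.Icc k j, s i) / ((j - k + 1 : ℕ) : ℝ))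
    -- k is the greatest index in [1, j-1] with s_{k-1} ≥ a (convention s_0 > 1)
    (hk : 1 ≤ k ∧ k ≤ j - 1 ∧ (k = 1 ∨ a ≤ s (k - 1)))
    (hkmax : ∀ k', 1 ≤ k' → k' ≤ j - 1 →
      (k' = 1 ∨ (∑ i ∈ Finset.Icc k' j, s i) / ((j - k' + 1 : ℕ) : ℝ) ≤ s (k' - 1)) →
      k' ≤ k)
    -- t replaces s_k, ..., s_j each by a and leaves other components unchanged
    (ht : ∀ i, t i = if k ≤ i ∧ i ≤ j then a else s i) :
    (∀ l, l ≤ N → PS p l ≤ PS t l) ∧ (∀ l, l ≤ N → PS q l ≤ PS t l) := by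
  obtain ⟨-, -, hjs⟩ := hj
  obtain ⟨hk1, -, -⟩ := hk
  have hmean : ((j - k + 1 : ℕ) : ℝ) * a = ∑ i ∈ Icc k j, s i := by
    rw [ha, mul_div_cancel₀ _ (by positivity)]
  have hst : ∀ l, PS s l ≤ PS t l := by
    rw [show t = flatten s k j a from funext ht]
    exact PS_le_PS_flatten hk1 fun l hlj => sum_Icc_sub_nonneg_of_le_tail_mean hmean
      (fun m hkm hmj => le_tail_mean_of_maximal hjs hkmax hkm hmj) hlj
  exact ⟨fun l hl => (le_max_left _ _).trans ((hs l hl).ge.trans (hst l)),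
    fun l hl => (le_max_right _ _).trans ((hs l hl).ge.trans (hst l))⟩

/-- One flattening step of the Cicalese–Vaccaro algorithm preserves the property of
majorizing both p and q. -/
theorem flattening_preserves_majorizing (N : ℕ) (p q s : ℕ → ℝ)
    (hs : ∀ l, l ≤ N → PS s l = max (PS p l) (PS q l))
    (j k : ℕ) (a : ℝ) (t : ℕ → ℝ)
    -- j is the smallest index in [2,N] with s_j > s_{j-1}
    (hj : 2 ≤ j ∧ j ≤ N ∧ s (j - 1) < s j)
    (hjmin : ∀ i, 2 ≤ i → i ≤ N → s (i - 1) < s i → j ≤ i)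
    -- a is the average of s_k, ..., s_j
    (ha : a = (∑ i ∈ Finset.Icc k j, s i) / ((j - k + 1 : ℕ) : ℝ))
    -- k is the greatest index in [1, j-1] with s_{k-1} ≥ a (convention s_0 > 1)
    (hk : 1 ≤ k ∧ k ≤ j - 1 ∧ (k = 1 ∨ a ≤ s (k - 1)))
    (hkmax : ∀ k', 1 ≤ k' → k' ≤ j - 1 →
      (k' = 1 ∨ (∑ i ∈ Finset.Icc k' j, s i) / ((j - k' + 1 : ℕ) : ℝ) ≤ s (k' - 1)) →
      k' ≤ k)
    -- t replaces s_k, ..., s_j each by a and leaves other components unchanged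
    (ht : ∀ i, t i = if k ≤ i ∧ i ≤ j then a else s i) :
    (∀ l, l ≤ N → PS p l ≤ PS t l) ∧ (∀ l, l ≤ N → PS q l ≤ PS t l) :=
  flattening_preserves_majorizing_general N p q s hs j k a t hj ha hk hkmax ht
end

section
/- For N = 2, the fidelity preserves the majorization order: if α, β, γ ∈ δ_2 with α ≺ β ≺ γ, then F(α, β) ≥ F(α, γ), where F(p,q) = (Σ_i √(p_i q_i))². -/
open Finset

/-- Fidelity between probability vectors. -/
noncomputable def Fid {N : ℕ} (p q : Fin N → ℝ) : ℝ := (∑ i, Real.sqrt (p i * q i)) ^ 2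

/-!
The Bhattacharyya coefficient `q ↦ ∑ i, √(p i * q i)` is concave on the nonnegative orthant, and on
the probability simplex it is at most `1` (AM–GM, termwise) with equality at `q = p`. So on a segment
starting at `p` it never drops below its value at the far end. In `δ_2` a probability vector is
determined by its first coordinate, so `α ≺ β ≺ γ` says exactly that `β` lies on the segment `[α, γ]`.
-/

open Real

section Bhattacharyya

variable {ι : Type*} [Fintype ι]

noncomputable def bhattacharyya (p q : ι → ℝ) : ℝ := ∑ i, √(p i * q i)

lemma concaveOn_bhattacharyya {p : ι → ℝ} (hp : 0 ≤ p) :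
    ConcaveOn ℝ (Set.Ici (0 : ι → ℝ)) (bhattacharyya p) := by
  have hterm (i : ι) : ConcaveOn ℝ (Set.Ici 0) fun q : ι → ℝ ↦ √(p i * q i) :=
    (strictConcaveOn_sqrt.concaveOn.comp_linearMap
      (p i • LinearMap.proj (R := ℝ) (φ := fun _ : ι ↦ ℝ) i)).subset
      (fun q (hq : 0 ≤ q) ↦ mul_nonneg (hp i) (hq i)) (convex_Ici 0)
  have hsum := Finset.sum_induction (s := univ) _ (ConcaveOn ℝ (Set.Ici 0))
    (fun _ _ ↦ ConcaveOn.add) (concaveOn_const 0 (convex_Ici 0)) fun i _ ↦ hterm i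
  convert hsum using 1
  ext q
  simp only [bhattacharyya, Finset.sum_apply]

lemma bhattacharyya_self {p : ι → ℝ} (hp : p ∈ stdSimplex ℝ ι) : bhattacharyya p p = 1 := by
  simp only [bhattacharyya, sqrt_mul_self (hp.1 _), hp.2]

lemma bhattacharyya_le_one {p q : ι → ℝ} (hp : p ∈ stdSimplex ℝ ι) (hq : q ∈ stdSimplex ℝ ι) :
    bhattacharyya p q ≤ 1 :=
  calc bhattacharyya p q ≤ ∑ i, (p i + q i) / 2 := by
        refine sum_le_sum fun i _ ↦ sqrt_le_iff.mpr ⟨by linarith [hp.1 i, hq.1 i], ?_⟩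
        nlinarith [sq_nonneg (p i - q i)]
    _ = 1 := by rw [← sum_div, sum_add_distrib, hp.2, hq.2]; norm_num

lemma bhattacharyya_le_of_mem_segment {p q r : ι → ℝ} (hp : p ∈ stdSimplex ℝ ι)
    (hr : r ∈ stdSimplex ℝ ι) (hq : q ∈ segment ℝ p r) :
    bhattacharyya p r ≤ bhattacharyya p q := by
  have hmin := (concaveOn_bhattacharyya hp.1).min_le_of_mem_segment hp.1 hr.1 hq
  rwa [bhattacharyya_self hp, min_eq_right (bhattacharyya_le_one hp hr)] at hmin

end Bhattacharyya

lemma fid_le_of_mem_segment {N : ℕ} {p q r : Fin N → ℝ} (hp : p ∈ stdSimplex ℝ (Fin N))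
    (hr : r ∈ stdSimplex ℝ (Fin N)) (hq : q ∈ segment ℝ p r) : Fid p r ≤ Fid p q :=
  pow_le_pow_left₀ (sum_nonneg fun _ _ ↦ sqrt_nonneg _)
    (bhattacharyya_le_of_mem_segment hp hr hq) 2

lemma mem_segment_of_apply_zero_mem_Icc {p q r : Fin 2 → ℝ} (hp : ∑ i, p i = 1)
    (hq : ∑ i, q i = 1) (hr : ∑ i, r i = 1) (h : q 0 ∈ Set.Icc (p 0) (r 0)) :
    q ∈ segment ℝ p r := by
  have hline {v : Fin 2 → ℝ} (hv : ∑ i, v i = 1) :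
      AffineMap.lineMap (k := ℝ) ![0, 1] ![1, 0] (v 0) = v := by
    rw [Fin.sum_univ_two] at hv
    ext i
    fin_cases i
    · simp [AffineMap.lineMap_apply_module]
    · simp [AffineMap.lineMap_apply_module]; linarith
  rw [← hline hp, ← hline hq, ← hline hr, ← image_segment]
  exact Set.mem_image_of_mem _ (Icc_subset_segment h)

lemma IsDecProb.mem_stdSimplex {N : ℕ} {p : Fin N → ℝ} (hp : IsDecProb p) :
    p ∈ stdSimplex ℝ (Fin N) :=
  ⟨hp.1, hp.2.2⟩

lemma Maj.apply_zero_le {N : ℕ} {p q : Fin (N + 1) → ℝ} (h : Maj p q) : p 0 ≤ q 0 := by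
  simpa [PartSum, Fin.sum_univ_succ] using h 1

/-- For N = 2 the fidelity preserves the majorization order. -/
theorem fid_preserves_maj_delta2 (α β γ : Fin 2 → ℝ)
    (hα : IsDecProb α) (hβ : IsDecProb β) (hγ : IsDecProb γ)
    (hαβ : Maj α β) (hβγ : Maj β γ) : Fid α γ ≤ Fid α β :=
  fid_le_of_mem_segment hα.mem_stdSimplex hγ.mem_stdSimplex <|
    mem_segment_of_apply_zero_mem_Icc hα.2.2 hβ.2.2 hγ.2.2 ⟨hαβ.apply_zero_le, hβγ.apply_zero_le⟩
end
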